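/- arXiv:0812.3334 — 2 statements merged into one kernel-verified Lean document; each statement's English description precedes it below -/
import Mathlib

section
/- Let M be a module with a filtration 0 = M₀ ⊂ M₁ ⊂ ⋯ ⊂ Mₙ = M such that each M_i/M_{i−1} is a 'standard' object Δ(μ_i). If Ext¹(Δ(μ), Δ(λ)) ≠ 0 implies λ > μ in a fixed partial order, then the filtration can be rearranged so that μ_i > μ_j implies i < j; i.e., there exists a Verma flag on M in which larger highest weights occur earlier. -/
/-!
Bubble sort. If `A ⊆ B ⊆ C` are consecutive steps of a Verma flag with `B/A ≅ Δ(λ)` and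
`C/B ≅ Δ(μ)` and the extension `0 → Δ(λ) → C/A → Δ(μ) → 0` splits, a complement of `B/A` in
`C/A` pulls back to `A ⊆ B' ⊆ C` with `B'/A ≅ Δ(μ)` and `C/B' ≅ Δ(λ)`: the two layers swap.
The Ext-vanishing makes this possible whenever `μ ≮ λ`, in particular whenever `λ < μ` in a
fixed linear extension of the order. Each such swap removes one increasing pair for that linear
extension, so repeated swapping ends in a flag whose weights decrease along it.
-/

/-- A Verma flag on the module `M`: a finite filtration
`0 = F 0 ⊆ F 1 ⊆ ⋯ ⊆ F n = M` whose successive subquotients are isomorphic to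
the standard objects `Δ (μ i)`. -/
structure VermaFlag (R : Type) [Ring R] {P : Type} [PartialOrder P]
    (Δ : P → Type) [∀ p, AddCommGroup (Δ p)] [∀ p, Module R (Δ p)]
    (M : Type) [AddCommGroup M] [Module R M] (n : ℕ) (μ : Fin n → P) where
  F : Fin (n + 1) → Submodule R M
  mono : Monotone F
  bot : F 0 = ⊥
  top : F (Fin.last n) = ⊤
  iso : ∀ i : Fin n,
    Nonempty ((F i.succ ⧸ Submodule.comap (F i.succ).subtype (F i.castSucc))
      ≃ₗ[R] Δ (μ i))

/-- Every extension `0 → X → E → Y → 0` splits, i.e. `Ext¹(Y, X) = 0`. -/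
def ExtensionsSplit (R : Type) [Ring R] (X Y : Type) [AddCommGroup X] [Module R X]
    [AddCommGroup Y] [Module R Y] : Prop :=
  ∀ (E : Type) [AddCommGroup E] [Module R E] (f : X →ₗ[R] E) (g : E →ₗ[R] Y),
    Function.Injective f → Function.Surjective g → LinearMap.range f = LinearMap.ker g →
    ∃ s : Y →ₗ[R] E, g.comp s = LinearMap.id

section Extensions

variable {R : Type} [Ring R] {X Y X' Y' E : Type}
  [AddCommGroup X] [Module R X] [AddCommGroup Y] [Module R Y]
  [AddCommGroup X'] [Module R X'] [AddCommGroup Y'] [Module R Y']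
  [AddCommGroup E] [Module R E]

theorem ExtensionsSplit.of_linearEquiv (h : ExtensionsSplit R X Y) (eX : X ≃ₗ[R] X')
    (eY : Y ≃ₗ[R] Y') : ExtensionsSplit R X' Y' := by
  intro E _ _ f g hf hg hfg
  obtain ⟨s, hs⟩ := h E (f ∘ₗ eX.toLinearMap) (eY.symm.toLinearMap ∘ₗ g)
    (hf.comp eX.injective) (eY.symm.surjective.comp hg)
    (by rw [LinearMap.range_comp_of_range_eq_top _ eX.range, LinearMap.ker_comp,
      LinearEquiv.ker, Submodule.comap_bot, hfg])
  refine ⟨s ∘ₗ eY.symm.toLinearMap, LinearMap.ext fun y => ?_⟩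
  have hy := LinearMap.congr_fun hs (eY.symm y)
  simp only [LinearMap.comp_apply, LinearEquiv.coe_coe, LinearMap.id_apply] at hy ⊢
  simpa using congrArg eY hy

theorem Submodule.exists_isCompl_of_extensionsSplit (K : Submodule R E)
    (h : ExtensionsSplit R K (E ⧸ K)) : ∃ L : Submodule R E, IsCompl K L := by
  obtain ⟨s, hs⟩ := h E K.subtype K.mkQ K.injective_subtype K.mkQ_surjective
    (by rw [K.range_subtype, K.ker_mkQ])
  have hidem : IsIdempotentElem (s ∘ₗ K.mkQ) := by
    rw [IsIdempotentElem, Module.End.mul_eq_comp, LinearMap.comp_assoc,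
      ← LinearMap.comp_assoc K.mkQ, hs, LinearMap.id_comp]
  have hker : LinearMap.ker (s ∘ₗ K.mkQ) = K := by
    rw [LinearMap.ker_comp_of_ker_eq_bot _ (LinearMap.ker_eq_bot_of_inverse hs), K.ker_mkQ]
  exact ⟨_, hker ▸ (LinearMap.IsIdempotentElem.isCompl hidem).symm⟩

end Extensions

namespace Submodule

variable {R : Type} [Ring R] {M : Type} [AddCommGroup M] [Module R M] {A B C : Submodule R M}

noncomputable def subquotientEquivMapMkQ (hBC : B ≤ C) :
    (B ⧸ A.comap B.subtype) ≃ₗ[R] (B.comap C.subtype).map (A.comap C.subtype).mkQ :=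
  let φ := (A.comap C.subtype).mkQ ∘ₗ inclusion hBC
  have hker : A.comap B.subtype = LinearMap.ker φ := by
    ext x
    simp [φ]
  have hrange : LinearMap.range φ = (B.comap C.subtype).map (A.comap C.subtype).mkQ := by
    rw [LinearMap.range_comp, range_inclusion]
  (quotEquivOfEq _ _ hker).trans (φ.quotKerEquivRange.trans (LinearEquiv.ofEq _ _ hrange))

noncomputable def quotientEquivQuotientMapMkQ (hAB : A ≤ B) :
    (C ⧸ B.comap C.subtype) ≃ₗ[R]
      (C ⧸ A.comap C.subtype) ⧸ (B.comap C.subtype).map (A.comap C.subtype).mkQ :=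
  (quotientQuotientEquivQuotient _ _ (comap_mono hAB)).symm

theorem le_map_subtype_comap_mkQ (hAC : A ≤ C) (L : Submodule R (C ⧸ A.comap C.subtype)) :
    A ≤ (L.comap (A.comap C.subtype).mkQ).map C.subtype := by
  calc A = (A.comap C.subtype).map C.subtype := by
        rw [map_comap_subtype, inf_eq_right.mpr hAC]
    _ ≤ _ := map_mono ((ker_mkQ _).ge.trans (LinearMap.ker_le_comap _))

theorem map_mkQ_comap_map_subtype_comap_mkQ (L : Submodule R (C ⧸ A.comap C.subtype)) :
    (((L.comap (A.comap C.subtype).mkQ).map C.subtype).comap C.subtype).map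
      (A.comap C.subtype).mkQ = L := by
  rw [comap_map_eq_of_injective C.injective_subtype,
    map_comap_eq_of_surjective (mkQ_surjective _)]

theorem exists_swap_subquotients (hAB : A ≤ B) (hBC : B ≤ C)
    (h : ExtensionsSplit R (B ⧸ A.comap B.subtype) (C ⧸ B.comap C.subtype)) :
    ∃ B' : Submodule R M, A ≤ B' ∧ B' ≤ C ∧
      Nonempty ((B' ⧸ A.comap B'.subtype) ≃ₗ[R] C ⧸ B.comap C.subtype) ∧
      Nonempty ((C ⧸ B'.comap C.subtype) ≃ₗ[R] B ⧸ A.comap B.subtype) := by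
  -- With `K ≅ B/A` inside `E = C/A`, a complement `L` of `K` pulls back to `B'` with
  -- `B'/A ≅ L ≅ E/K ≅ C/B` and `C/B' ≅ E/L ≅ K ≅ B/A`.
  set K := (B.comap C.subtype).map (A.comap C.subtype).mkQ
  obtain ⟨L, hKL⟩ := K.exists_isCompl_of_extensionsSplit
    (h.of_linearEquiv (subquotientEquivMapMkQ hBC) (quotientEquivQuotientMapMkQ hAB))
  set B' := (L.comap (A.comap C.subtype).mkQ).map C.subtype
  have hAB' : A ≤ B' := le_map_subtype_comap_mkQ (hAB.trans hBC) L
  have hL : (B'.comap C.subtype).map (A.comap C.subtype).mkQ = L :=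
    map_mkQ_comap_map_subtype_comap_mkQ L
  refine ⟨B', hAB', map_subtype_le _ _, ⟨?_⟩, ⟨?_⟩⟩
  · exact (subquotientEquivMapMkQ (map_subtype_le _ _)).trans <|
      (LinearEquiv.ofEq _ _ hL).trans <|
      (quotientEquivOfIsCompl K L hKL).symm.trans (quotientEquivQuotientMapMkQ hAB).symm
  · exact (quotientEquivQuotientMapMkQ hAB').trans <| (quotEquivOfEq _ _ hL).trans <|
      (quotientEquivOfIsCompl L K hKL.symm).trans (subquotientEquivMapMkQ hBC).symm

end Submodule

theorem Monotone.update_of_le {ι α : Type*} [LinearOrder ι] [Preorder α] [DecidableEq ι]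
    {f : ι → α} (hf : Monotone f) {p : ι} {b : α} (hlo : ∀ a < p, f a ≤ b)
    (hhi : ∀ c, p < c → b ≤ f c) : Monotone (Function.update f p b) := by
  intro x y hxy
  by_cases hx : x = p <;> by_cases hy : y = p
  · simp [hx, hy]
  · subst hx
    simpa [hy] using hhi y (hxy.lt_of_ne (Ne.symm hy))
  · subst hy
    simpa [hx] using hlo x (hxy.lt_of_ne hx)
  · simpa [hx, hy] using hf hxy

namespace VermaFlag

variable {R : Type} [Ring R] {P : Type} [PartialOrder P] {Δ : P → Type}
  [∀ p, AddCommGroup (Δ p)] [∀ p, Module R (Δ p)] {M : Type} [AddCommGroup M] [Module R M]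
  {n : ℕ} {μ : Fin n → P}

theorem exists_swap (flag : VermaFlag R Δ M n μ) {i j : Fin n} (hij : (j : ℕ) = i + 1)
    (hsplit : ExtensionsSplit R (Δ (μ i)) (Δ (μ j))) :
    Nonempty (VermaFlag R Δ M n (μ ∘ Equiv.swap i j)) := by
  have hsucc : j.castSucc = i.succ := Fin.ext (by simp [hij])
  obtain ⟨ea⟩ := flag.iso i
  obtain ⟨eb⟩ := flag.iso j
  rw [hsucc] at eb
  obtain ⟨B', hAB', hB'C, ⟨e₁⟩, ⟨e₂⟩⟩ := Submodule.exists_swap_subquotients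
    (flag.mono i.castSucc_le_succ) (hsucc ▸ flag.mono j.castSucc_le_succ)
    (hsplit.of_linearEquiv ea.symm eb.symm)
  refine ⟨⟨Function.update flag.F i.succ B', ?_, ?_, ?_, fun k => ?_⟩⟩
  · refine flag.mono.update_of_le
      (fun a ha => (flag.mono (Fin.le_castSucc_iff.mpr ha)).trans hAB')
      (fun c hc => hB'C.trans (flag.mono ?_))
    rw [← hsucc, Fin.castSucc_lt_iff_succ_le] at hc
    exact hc
  · rw [Function.update_of_ne (Fin.succ_ne_zero i).symm]
    exact flag.bot
  · rw [Function.update_of_ne (hsucc ▸ j.castSucc_lt_last).ne']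
    exact flag.top
  · rcases eq_or_ne k i with rfl | hki
    · rw [Function.update_self, Function.update_of_ne Fin.castSucc_lt_succ.ne,
        Function.comp_apply, Equiv.swap_apply_left]
      exact ⟨e₁.trans eb⟩
    rcases eq_or_ne k j with rfl | hkj
    · rw [Function.update_of_ne (Fin.succ_inj.not.mpr hki), ← hsucc, Function.update_self,
        Function.comp_apply, Equiv.swap_apply_right]
      exact ⟨e₂.trans ea⟩
    · rw [Function.update_of_ne (Fin.succ_inj.not.mpr hki),
        Function.update_of_ne (hsucc ▸ Fin.castSucc_inj.not.mpr hkj), Function.comp_apply,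
        Equiv.swap_apply_of_ne_of_ne hki hkj]
      exact flag.iso k

end VermaFlag

section Sorting

variable {α : Type*} [LinearOrder α] {n : ℕ}

def increasingPairs (g : Fin n → α) : Finset (Fin n × Fin n) :=
  {p | p.1 < p.2 ∧ g p.1 < g p.2}

theorem swap_lt_swap_of_adjacent {i j a b : Fin n} (hij : (j : ℕ) = i + 1) (hab : a < b)
    (hne : (a, b) ≠ (i, j)) : Equiv.swap i j a < Equiv.swap i j b := by
  simp only [ne_eq, Prod.mk.injEq, Fin.ext_iff, not_and] at hne
  rw [Fin.lt_def] at hab ⊢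
  simp only [Equiv.swap_apply_def, Fin.ext_iff]
  split_ifs <;> omega

theorem card_increasingPairs_comp_swap_lt (g : Fin n → α) {i j : Fin n}
    (hij : (j : ℕ) = i + 1) (hlt : g i < g j) :
    (increasingPairs (g ∘ Equiv.swap i j)).card < (increasingPairs g).card := by
  set s := Equiv.swap i j
  have hi : s i = j := Equiv.swap_apply_left i j
  have hj : s j = i := Equiv.swap_apply_right i j
  have hij_lt : i < j := Fin.lt_def.mpr (by omega)
  let e := (s.prodCongr s).toEmbedding
  rw [← Finset.card_map e]
  apply Finset.card_lt_card
  rw [Finset.ssubset_iff_of_subset]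
  · refine ⟨(i, j), by simp [increasingPairs, hij_lt, hlt], ?_⟩
    simp only [Finset.mem_map, not_exists, not_and]
    intro q hq hqe
    simp only [e, Equiv.coe_toEmbedding, Equiv.prodCongr_apply, Prod.map, Prod.mk.injEq] at hqe
    have hq₁ : q.1 = j := s.injective (hqe.1.trans hj.symm)
    have hq₂ : q.2 = i := s.injective (hqe.2.trans hi.symm)
    simp only [increasingPairs, Finset.mem_filter, hq₁, hq₂] at hq
    exact hij_lt.not_gt hq.2.1
  · intro p hp
    obtain ⟨q, hq, rfl⟩ := Finset.mem_map.mp hp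
    simp only [increasingPairs, Finset.mem_filter, Finset.mem_univ, true_and,
      Function.comp_apply] at hq ⊢
    refine ⟨swap_lt_swap_of_adjacent hij hq.1 fun hqij => ?_, hq.2⟩
    simp only [Prod.mk.injEq] at hqij
    rw [hqij.1, hqij.2, hi, hj] at hq
    exact lt_asymm hlt hq.2

theorem exists_adjacent_lt_of_not_antitone {g : Fin n → α} (h : ¬ Antitone g) :
    ∃ i j : Fin n, (j : ℕ) = i + 1 ∧ g i < g j := by
  cases n with
  | zero => exact absurd (fun a => a.elim0) h
  | succ m =>
    simp only [Fin.antitone_iff_succ_le, not_forall, not_le] at h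
    obtain ⟨i, hi⟩ := h
    exact ⟨i.castSucc, i.succ, by simp, hi⟩

theorem exists_perm_antitone_of_adjacent_swap {P : Type*} (v : P → α)
    (Q : (Fin n → P) → Prop)
    (hQ : ∀ (μ : Fin n → P) (i j : Fin n), (j : ℕ) = i + 1 → v (μ i) < v (μ j) → Q μ →
      Q (μ ∘ Equiv.swap i j))
    (μ : Fin n → P) (hμ : Q μ) :
    ∃ σ : Equiv.Perm (Fin n), Antitone (v ∘ μ ∘ σ) ∧ Q (μ ∘ σ) := by
  induction hm : (increasingPairs (v ∘ μ)).card using Nat.strong_induction_on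
    generalizing μ with
  | _ m ih =>
  by_cases hanti : Antitone (v ∘ μ)
  · exact ⟨1, hanti, hμ⟩
  obtain ⟨i, j, hij, hlt⟩ := exists_adjacent_lt_of_not_antitone hanti
  obtain ⟨σ, hσ, hQσ⟩ := ih _ (hm ▸ card_increasingPairs_comp_swap_lt (v ∘ μ) hij hlt)
    (μ ∘ Equiv.swap i j) (hQ μ i j hij hlt hμ) rfl
  exact ⟨Equiv.swap i j * σ, hσ, hQσ⟩

end Sorting

theorem toLinearExtension_strictMono {P : Type*} [PartialOrder P] :
    StrictMono (toLinearExtension : P → LinearExtension P) :=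
  toLinearExtension.monotone.strictMono_of_injective fun _ _ h => h

/-- if `Ext¹(Δ(μ), Δ(λ)) ≠ 0` implies `λ > μ` (formulated as:
every extension `0 → Δ(λ) → E → Δ(μ) → 0` splits unless `λ > μ`), then any
Verma flag of `M` can be rearranged so that larger highest weights occur
earlier: there is a permutation `σ` of the indices such that
`μ(σ i) > μ(σ j)` implies `i < j` and `M` has a Verma flag with subquotients
`Δ(μ(σ 0)), …, Δ(μ(σ (n−1)))` in this order. -/
theorem verma_flag_reorder
    (R P : Type) [Ring R] [PartialOrder P] (Δ : P → Type)
    [∀ p, AddCommGroup (Δ p)] [∀ p, Module R (Δ p)]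
    (hext : ∀ mu lam : P, ¬ mu < lam →
      ∀ (E : Type) [AddCommGroup E] [Module R E]
        (f : Δ lam →ₗ[R] E) (g : E →ₗ[R] Δ mu),
        Function.Injective f → Function.Surjective g →
        LinearMap.range f = LinearMap.ker g →
        ∃ s : Δ mu →ₗ[R] E, g.comp s = LinearMap.id)
    (M : Type) [AddCommGroup M] [Module R M] (n : ℕ) (μ : Fin n → P)
    (flag : VermaFlag R Δ M n μ) :
    ∃ σ : Equiv.Perm (Fin n),
      (∀ i j : Fin n, μ (σ j) < μ (σ i) → i < j) ∧
      Nonempty (VermaFlag R Δ M n (μ ∘ σ)) := by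
  have hswap : ∀ (ν : Fin n → P) (i j : Fin n), (j : ℕ) = i + 1 →
      toLinearExtension (ν i) < toLinearExtension (ν j) →
      Nonempty (VermaFlag R Δ M n ν) → Nonempty (VermaFlag R Δ M n (ν ∘ Equiv.swap i j)) :=
    fun ν i j hij hlt ⟨F⟩ => F.exists_swap hij
      (hext (ν j) (ν i) fun hji => lt_asymm hlt (toLinearExtension_strictMono hji))
  obtain ⟨σ, hanti, hflag⟩ :=
    exists_perm_antitone_of_adjacent_swap toLinearExtension _ hswap μ ⟨flag⟩
  exact ⟨σ, fun i j hlt => hanti.reflect_lt (toLinearExtension_strictMono hlt), hflag⟩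
end

section
/- Suppose P is an object with a two-step filtration 0 → Δ(μ) → P → Δ(λ) → 0 and C is an endomorphism of P acting on Δ(λ) by scalar c and nonzero as C − c·id on P (with image of C − c·id contained in Δ(μ)). If 0 → Δ(μ) → M → X → 0 is exact, X is a quotient of Δ(λ) (a highest weight module of highest weight λ), C acts on M as the scalar c, and f: P → M is a map with surjective composite P → M → X, then Δ(μ) ⊂ P lies in the kernel of f, provided every nonzero endomorphism of Δ(μ) is injective. -/
/-!
`Cas - c` is a nonzero map `P → Δ(μ)` killed by `f`, because `Cas` acts on `M` by `c`; so `f`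
vanishes on some nonzero `w ∈ Δ(μ)`. Restricted to `Δ(μ)`, `f` is an endomorphism of `Δ(μ)` with
nontrivial kernel, hence zero, since nonzero endomorphisms of `Δ(μ)` are injective.
-/

open LinearMap

section Semiring

variable {R N P M : Type*} [Semiring R] [AddCommMonoid N] [Module R N]
  [AddCommMonoid P] [Module R P] [AddCommMonoid M] [Module R M]

theorem LinearMap.exists_comp_eq_of_range_le {ι : N →ₗ[R] M} (hι : Function.Injective ι)
    {g : P →ₗ[R] M} (hg : range g ≤ range ι) : ∃ h : P →ₗ[R] N, ι ∘ₗ h = g :=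
  ⟨(LinearEquiv.ofInjective ι hι).symm.toLinearMap ∘ₗ g.codRestrict _ fun p => hg ⟨p, rfl⟩, by
    ext p
    simp [← LinearEquiv.ofInjective_apply (h := hι)]⟩

theorem comp_eq_zero_of_map_eq_zero {ι : N →ₗ[R] P} {ιM : N →ₗ[R] M}
    (hιM : Function.Injective ιM) {f : P →ₗ[R] M} (hfD : range (f ∘ₗ ι) ≤ range ιM)
    (hend : ∀ g : N →ₗ[R] N, g ≠ 0 → Function.Injective g) {w : N} (hw : w ≠ 0)
    (hfw : f (ι w) = 0) :
    f ∘ₗ ι = 0 := by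
  obtain ⟨h, hh⟩ := exists_comp_eq_of_range_le hιM hfD
  have hhw : h w = h 0 := hιM (by rw [← comp_apply, hh, comp_apply, hfw, map_zero, map_zero])
  have h0 : h = 0 := by_contra fun hne => hw (hend h hne hhw)
  rw [← hh, h0, comp_zero]

end Semiring

section CommRing

variable {R N P M : Type*} [CommRing R] [AddCommGroup N] [Module R N]
  [AddCommGroup P] [Module R P] [AddCommGroup M] [Module R M]

theorem exists_ne_zero_map_eq_zero_of_casimir {ι : N →ₗ[R] P} {f : P →ₗ[R] M} {c : R}
    {Cas : P →ₗ[R] P} (hCrange : range (Cas - c • LinearMap.id) ≤ range ι)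
    (hCne : Cas - c • LinearMap.id ≠ 0) (hfC : f ∘ₗ Cas = c • f) :
    ∃ w : N, w ≠ 0 ∧ f (ι w) = 0 := by
  obtain ⟨p, hp⟩ := DFunLike.ne_iff.mp hCne
  obtain ⟨w, hw⟩ := hCrange (mem_range_self _ p)
  refine ⟨w, ?_, ?_⟩
  · rintro rfl
    exact hp (by simp [← hw])
  · have hfCas : f ∘ₗ (Cas - c • LinearMap.id) = 0 := by
      rw [comp_sub, hfC, comp_smul, comp_id, sub_self]
    rw [hw, ← comp_apply, hfCas, LinearMap.zero_apply]

end CommRing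

theorem casimir_kernel_argument_general
    (R : Type) [CommRing R]
    (Dmu P M : Type)
    [AddCommGroup Dmu] [Module R Dmu]
    [AddCommGroup P] [Module R P] [AddCommGroup M] [Module R M]
    (ι : Dmu →ₗ[R] P)
    (ιM : Dmu →ₗ[R] M)
    (hιM : Function.Injective ιM)
    (c : R) (Cas : P →ₗ[R] P)
    (hCrange : LinearMap.range (Cas - c • LinearMap.id) ≤ LinearMap.range ι)
    (hCne : Cas - c • LinearMap.id ≠ 0)
    (f : P →ₗ[R] M)
    (hfC : f.comp Cas = c • f)
    (hfD : ∀ u : Dmu, ∃ v : Dmu, f (ι u) = ιM v)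
    (hend : ∀ g : Dmu →ₗ[R] Dmu, g ≠ 0 → Function.Injective g) :
    ∀ u : Dmu, f (ι u) = 0 := by
  obtain ⟨w, hw, hfw⟩ := exists_ne_zero_map_eq_zero_of_casimir hCrange hCne hfC
  have hrange : range (f ∘ₗ ι) ≤ range ιM := by
    rintro _ ⟨u, rfl⟩
    obtain ⟨v, hv⟩ := hfD u
    exact ⟨v, hv.symm⟩
  intro u
  rw [← comp_apply, comp_eq_zero_of_map_eq_zero hιM hrange hend hw hfw, LinearMap.zero_apply]

/-- abstract Casimir argument, Lemma 5.6: given exact sequences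
`0 → Δ(μ) →ι P →π Δ(λ) → 0` and `0 → Δ(μ) →ιM M →πM X → 0`, where `X` is a
quotient of `Δ(λ)` via `q` with commuting square `πM ∘ f = q ∘ π`, a Casimir
operator `Cas` on `P` with `Cas − c·id ≠ 0` and image contained in `Δ(μ) = im ι`,
such that `Cas` acts on `M` as the scalar `c` (so `f ∘ Cas = c·f`), `f` maps the
copy of `Δ(μ)` in `P` into the copy of `Δ(μ)` in `M`, the composite
`P → M → X` is surjective, and every nonzero endomorphism of `Δ(μ)` is
injective — then `Δ(μ) ⊆ P` lies in the kernel of `f`. -/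
theorem casimir_kernel_argument
    (R : Type) [CommRing R]
    (Dmu Dlam P M X : Type)
    [AddCommGroup Dmu] [Module R Dmu] [AddCommGroup Dlam] [Module R Dlam]
    [AddCommGroup P] [Module R P] [AddCommGroup M] [Module R M]
    [AddCommGroup X] [Module R X]
    (ι : Dmu →ₗ[R] P) (π : P →ₗ[R] Dlam)
    (hι : Function.Injective ι) (hπ : Function.Surjective π)
    (hex : LinearMap.range ι = LinearMap.ker π)
    (ιM : Dmu →ₗ[R] M) (πM : M →ₗ[R] X)
    (hιM : Function.Injective ιM) (hπM : Function.Surjective πM)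
    (hexM : LinearMap.range ιM = LinearMap.ker πM)
    (q : Dlam →ₗ[R] X) (hq : Function.Surjective q)
    (c : R) (Cas : P →ₗ[R] P)
    (hCrange : LinearMap.range (Cas - c • LinearMap.id) ≤ LinearMap.range ι)
    (hCne : Cas - c • LinearMap.id ≠ 0)
    (f : P →ₗ[R] M)
    (hsquare : πM.comp f = q.comp π)
    (hfC : f.comp Cas = c • f)
    (hfD : ∀ u : Dmu, ∃ v : Dmu, f (ι u) = ιM v)
    (hend : ∀ g : Dmu →ₗ[R] Dmu, g ≠ 0 → Function.Injective g)
    (hsurj : Function.Surjective (πM.comp f)) :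
    ∀ u : Dmu, f (ι u) = 0 :=
  casimir_kernel_argument_general R Dmu P M ι ιM hιM c Cas hCrange hCne f hfC hfD hend
end
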